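/- arXiv:2204.11111 — 2 statements merged into one kernel-verified Lean document; each statement's English description precedes it below -/
import Mathlib

section
/- There exists a continuous surjection from the unit interval [0,1] onto the unit square [0,1] × [0,1]. -/
/-!
Lebesgue's construction. By the Hausdorff–Alexandroff theorem the square is a continuous image
of the Cantor space `ℕ → Bool`, which sits in `[0,1]` as the Cantor set, a closed subset. By
Tietze's theorem `[0,1]`, hence also the square, is an absolute extensor for normal spaces, so
the surjection defined on the Cantor set extends continuously to all of `[0,1]`.
-/

open Set Topology unitInterval

theorem exists_isClosedEmbedding_cantorSpace_unitInterval :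
    ∃ e : (ℕ → Bool) → I, IsClosedEmbedding e := by
  let e := inclusion cantorSet_subset_unitInterval ∘ cantorSetHomeomorphNatToBool.symm
  have he : Continuous e := (continuous_inclusion _).comp (Homeomorph.continuous _)
  exact ⟨e, he.isClosedEmbedding <|
    (inclusion_injective _).comp cantorSetHomeomorphNatToBool.symm.injective⟩

theorem exists_continuous_surjective_of_unitInterval (Y : Type*) [MetricSpace Y]
    [CompactSpace Y] [Nonempty Y] [TietzeExtension.{0} Y] :
    ∃ g : C(I, Y), Function.Surjective g := by
  obtain ⟨f, hf, hf_surj⟩ := exists_nat_bool_continuous_surjective_of_compact Y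
  obtain ⟨e, he⟩ := exists_isClosedEmbedding_cantorSpace_unitInterval
  obtain ⟨g, hg⟩ := ContinuousMap.exists_extension' he ⟨f, hf⟩
  refine ⟨g, fun y => ?_⟩
  obtain ⟨a, rfl⟩ := hf_surj y
  exact ⟨e a, congrFun hg a⟩

/-- There exists a continuous surjection from the unit interval [0,1]
onto the unit square [0,1] × [0,1] (a space-filling curve). -/
theorem exists_space_filling_curve :
    ∃ F : ℝ → ℝ × ℝ, ContinuousOn F (Set.Icc 0 1) ∧
      F '' Set.Icc 0 1 = (Set.Icc (0:ℝ) 1) ×ˢ (Set.Icc (0:ℝ) 1) := by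
  obtain ⟨g, hg⟩ := exists_continuous_surjective_of_unitInterval (I × I)
  let G : I → ℝ × ℝ := Prod.map Subtype.val Subtype.val ∘ g
  refine ⟨G ∘ projIcc 0 1 zero_le_one, (by fun_prop : Continuous _).continuousOn, ?_⟩
  calc G ∘ projIcc 0 1 zero_le_one '' Icc 0 1 = G '' univ := by
        rw [image_comp, (projIcc_surjOn zero_le_one).image_eq_of_mapsTo (mapsTo_univ _ _)]
    _ = range (Prod.map Subtype.val Subtype.val) := by
        rw [image_univ, range_comp, hg.range_eq, image_univ]
    _ = Icc 0 1 ×ˢ Icc 0 1 := by rw [range_prodMap, Subtype.range_coe]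
end

section
/- Let ω be a primitive substitution on a finite tile set with expansion λ > 1, and suppose there is a tile p, a vector x ∈ ℝ², and n ∈ ℤ⁺ with p + x ∈ ωⁿ(p + x) and supp(p + x) disjoint from the boundary of supp ωⁿ(p + x). Then the increasing union of supports ⋃ᵢ supp ω^{in}(p + x) equals all of ℝ². -/
/-- A planar substitution on a finite collection of tiles in ℝ². Each tile (indexed by
`TileIdx`) has a support homeomorphic to the closed unit disc and a colour label. The
substitution expands each tile by the factor `lam > 1` and divides it into translated copies
of tiles (`pieces`), with pairwise disjoint interiors, whose supports union to the expanded
support. -/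
structure PlanarSubstitution where
  TileIdx : Type
  finite : Finite TileIdx
  support : TileIdx → Set (ℝ × ℝ)
  label : TileIdx → ℕ
  disc : ∀ p, Nonempty (↥(support p) ≃ₜ ↥(Metric.closedBall (0 : ℝ × ℝ) 1))
  lam : ℝ
  one_lt_lam : 1 < lam
  pieces : TileIdx → Set (TileIdx × (ℝ × ℝ))
  pieces_finite : ∀ p, (pieces p).Finite
  pieces_nonempty : ∀ p, (pieces p).Nonempty
  support_eq : ∀ p,
    (⋃ q ∈ pieces p, (fun y => y + q.2) '' support q.1) = (fun y => lam • y) '' support p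
  disjoint_interiors : ∀ p, ∀ q ∈ pieces p, ∀ r ∈ pieces p, q ≠ r →
    Disjoint (interior ((fun y => y + q.2) '' support q.1))
      (interior ((fun y => y + r.2) '' support r.1))

/-- The n-supertile ωⁿ(p), as the collection of its constituent tiles, each recorded as a
prototile index together with a translation vector (using ω(q + x) = ω(q) + λ·x). -/
def PlanarSubstitution.iter (S : PlanarSubstitution) : ℕ → S.TileIdx → Set (S.TileIdx × (ℝ × ℝ))
  | 0 => fun p => {(p, 0)}
  | n + 1 => fun p =>
      ⋃ q ∈ S.pieces p, (fun r => (r.1, r.2 + S.lam ^ n • q.2)) '' S.iter n q.1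


/-- A substitution is primitive if some power of it, applied to any tile, contains a copy of
every tile. -/
def PlanarSubstitution.Primitive (S : PlanarSubstitution) : Prop :=
  ∃ k : ℕ, 0 < k ∧ ∀ p q : S.TileIdx, ∃ t ∈ S.iter k p, t.1 = q

/-!
Write `K = supp (p + x)` and `c = λⁿ`, so that `supp ω^{in}(p + x) = cⁱ • K`. The fixed-tile
hypothesis gives `K ⊆ c • K`, and with the boundary hypothesis `K ⊆ interior (c • K)`. By
compactness some `δ`-thickening of `K` still lies in `c • K`; scaling by `cⁱ ≥ 1` shows that the
`δ`-thickening of `cⁱ • K` lies in `cⁱ⁺¹ • K`. So the supertile supports contain balls of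
radius `(i + 1) δ` about a point of `K`, and exhaust the plane.
-/

open Metric Set
open scoped Pointwise

section Thickening

variable {E : Type*} [NormedAddCommGroup E]

theorem smul_thickening {𝕜 : Type*} [NormedField 𝕜] [NormedSpace 𝕜 E] {c : 𝕜} (hc : c ≠ 0)
    (δ : ℝ) (s : Set E) : c • thickening δ s = thickening (‖c‖ * δ) (c • s) := by
  simp_rw [thickening_eq_biUnion_ball, smul_set_iUnion₂, _root_.smul_ball hc, ← image_smul,
    biUnion_image]

variable [NormedSpace ℝ E]

theorem iUnion_eq_univ_of_thickening_subset_succ {A : ℕ → Set E} {δ : ℝ} (hδ : 0 < δ)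
    (h0 : (A 0).Nonempty) (hA : ∀ i, thickening δ (A i) ⊆ A (i + 1)) : ⋃ i, A i = univ := by
  have hgrow : ∀ i : ℕ, thickening ((i + 1) * δ) (A 0) ⊆ A (i + 1) := by
    intro i
    induction i with
    | zero => simpa using hA 0
    | succ i ih =>
      calc thickening ((↑(i + 1) + 1) * δ) (A 0)
          = thickening δ (thickening ((i + 1) * δ) (A 0)) := by
            rw [thickening_thickening hδ (by positivity)]
            push_cast
            ring_nf
        _ ⊆ thickening δ (A (i + 1)) := thickening_subset_of_subset δ ih
        _ ⊆ A (i + 1 + 1) := hA (i + 1)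
  obtain ⟨b, hb⟩ := h0
  refine eq_univ_of_forall fun z => ?_
  obtain ⟨i, hi⟩ := exists_nat_gt (dist z b / δ)
  have hzb : dist z b < (i + 1) * δ := by
    rw [div_lt_iff₀ hδ] at hi
    nlinarith
  exact mem_iUnion.2 ⟨i + 1, hgrow i (mem_thickening_iff.2 ⟨b, hb, hzb⟩)⟩

theorem iUnion_pow_smul_eq_univ_of_subset_interior {K : Set E} {c : ℝ} (hc : 1 ≤ c)
    (hK : IsCompact K) (hne : K.Nonempty) (hsub : K ⊆ interior (c • K)) :
    ⋃ i : ℕ, c ^ i • K = univ := by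
  obtain ⟨δ, hδ, hδK⟩ := hK.exists_thickening_subset_open isOpen_interior hsub
  refine iUnion_eq_univ_of_thickening_subset_succ hδ (by simpa using hne) fun i => ?_
  have hci : 1 ≤ ‖c ^ i‖ := by
    rw [Real.norm_of_nonneg (by positivity)]
    exact one_le_pow₀ hc
  calc thickening δ (c ^ i • K)
      ⊆ thickening (‖c ^ i‖ * δ) (c ^ i • K) :=
        thickening_mono (le_mul_of_one_le_left hδ.le hci) _
    _ = c ^ i • thickening δ K := (smul_thickening (by positivity) δ K).symm
    _ ⊆ c ^ i • c • K := smul_set_mono (hδK.trans interior_subset)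
    _ = c ^ (i + 1) • K := by rw [smul_smul, pow_succ]

end Thickening

namespace PlanarSubstitution

variable (S : PlanarSubstitution)

theorem isCompact_support (p : S.TileIdx) : IsCompact (S.support p) := by
  obtain ⟨e⟩ := S.disc p
  have : CompactSpace (closedBall (0 : ℝ × ℝ) 1) :=
    isCompact_iff_compactSpace.mp (isCompact_closedBall _ _)
  exact isCompact_iff_compactSpace.mpr e.symm.compactSpace

theorem support_nonempty (p : S.TileIdx) : (S.support p).Nonempty := by
  obtain ⟨e⟩ := S.disc p
  exact ⟨_, (e.symm ⟨0, mem_closedBall_self zero_le_one⟩).2⟩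

theorem image_add_support_subset_of_mem_iter {n : ℕ} {p : S.TileIdx}
    {t : S.TileIdx × (ℝ × ℝ)} (ht : t ∈ S.iter n p) :
    (· + t.2) '' S.support t.1 ⊆ S.lam ^ n • S.support p := by
  induction n generalizing p t with
  | zero =>
    obtain rfl : t = (p, 0) := ht
    simp
  | succ n ih =>
    simp only [iter, mem_iUnion, mem_image] at ht
    obtain ⟨q, hq, r, hr, rfl⟩ := ht
    rintro _ ⟨y, hy, rfl⟩
    obtain ⟨z, hz, hzy : S.lam ^ n • z = y + r.2⟩ := ih hr ⟨y, hy, rfl⟩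
    have hpiece : z + q.2 ∈ S.lam • S.support p := by
      rw [← image_smul, ← S.support_eq p]
      exact mem_biUnion hq ⟨z, hz, rfl⟩
    obtain ⟨w, hw, hwz : S.lam • w = z + q.2⟩ := hpiece
    refine ⟨w, hw, ?_⟩
    change (S.lam ^ n * S.lam) • w = y + (r.2 + S.lam ^ n • q.2)
    rw [mul_smul, hwz, smul_add, hzy, add_assoc]

end PlanarSubstitution

theorem union_supertile_supports_eq_univ_general (S : PlanarSubstitution)
    (p : S.TileIdx) (x : ℝ × ℝ) (n : ℕ)
    (hfix : ∃ t ∈ S.iter n p, t.1 = p ∧ t.2 + S.lam ^ n • x = x)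
    (hbd : Disjoint ((fun y => y + x) '' S.support p)
      (frontier ((fun y => S.lam ^ n • y + S.lam ^ n • x) '' S.support p))) :
    (⋃ i : ℕ, (fun y => S.lam ^ (i * n) • y + S.lam ^ (i * n) • x) '' S.support p)
      = Set.univ := by
  set K := (fun y => y + x) '' S.support p
  have hscale : ∀ a : ℝ, (fun y => a • y + a • x) '' S.support p = a • K := by
    intro a
    rw [← image_smul, image_image]
    simp_rw [smul_add]
  have hK_sub : K ⊆ S.lam ^ n • K := by
    obtain ⟨t, ht, rfl, htx⟩ := hfix
    rintro _ ⟨y, hy, rfl⟩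
    obtain ⟨z, hz, hzy⟩ := S.image_add_support_subset_of_mem_iter ht ⟨y, hy, rfl⟩
    rw [← hscale]
    exact ⟨z, hz, by simp only [hzy, add_assoc, htx]⟩
  have hK_int : K ⊆ interior (S.lam ^ n • K) := by
    rw [← self_sdiff_frontier, ← hscale]
    exact subset_sdiff.2 ⟨hscale _ ▸ hK_sub, hbd⟩
  simp_rw [hscale, pow_mul']
  exact iUnion_pow_smul_eq_univ_of_subset_interior (one_le_pow₀ S.one_lt_lam.le)
    ((S.isCompact_support p).image (continuous_add_const x)) ((S.support_nonempty p).image _)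
    hK_int

/-- If ω is primitive and some tile p + x occurs inside its own n-supertile
ωⁿ(p + x) with support disjoint from the boundary of supp ωⁿ(p + x), then the increasing
union of the supertile supports supp ω^{in}(p + x) = λ^{in}·supp p + λ^{in}·x exhausts ℝ². -/
theorem union_supertile_supports_eq_univ (S : PlanarSubstitution)
    (hprim : S.Primitive)
    (p : S.TileIdx) (x : ℝ × ℝ) (n : ℕ) (hn : 0 < n)
    (hfix : ∃ t ∈ S.iter n p, t.1 = p ∧ t.2 + S.lam ^ n • x = x)
    (hbd : Disjoint ((fun y => y + x) '' S.support p)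
      (frontier ((fun y => S.lam ^ n • y + S.lam ^ n • x) '' S.support p))) :
    (⋃ i : ℕ, (fun y => S.lam ^ (i * n) • y + S.lam ^ (i * n) • x) '' S.support p)
      = Set.univ :=
  union_supertile_supports_eq_univ_general S p x n hfix hbd
end
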